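/- arXiv:1609.01543 — 7 statements merged into one kernel-verified Lean document; each statement's English description precedes it below -/
import Mathlib

section
/- For every integer m ≥ 1, the map T defined by Tx = H^(m)x is a linear bijection from the Hilbert difference sequence space h_0(Δ^(m)) onto the space c₀ of real null sequences, and it is norm-preserving when h_0(Δ^(m)) carries the norm ‖x‖ = sup_n |(H^(m)x)_n| and c₀ carries the sup norm. In particular h_0(Δ^(m)) is linearly isometrically isomorphic to c₀. -/
open Filter Finset Topology

/- Real sequences are modelled as functions `ℕ → ℝ`, where the Lean index `n : ℕ`
corresponds to the paper's index `n + 1` (the paper indexes sequences by `k ≥ 1`).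
Thus the paper's entry `h_{nk} = ∑_{i=k}^{n} (-1)^{i-k} C(m, i-k) / (n+i-1)`
(for `1 ≤ k ≤ n`) becomes, with 0-based indices,
`hMat m n k = ∑_{i ∈ Icc k n} (-1)^{i-k} C(m, i-k) / (n+i+1)`. -/

/-- The entries of the triangle matrix `H^(m) = H Δ^(m)` (0-based indexing). -/
noncomputable def hMat (m n k : ℕ) : ℝ :=
  ∑ i ∈ Finset.Icc k n, (-1 : ℝ) ^ (i - k) * (Nat.choose m (i - k) : ℝ) / ((n + i + 1 : ℕ) : ℝ)

/-- The `H^(m)`-transform of a sequence: `(H^(m) x)_n = ∑_{k=1}^{n} h_{nk} x_k`. -/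
noncomputable def hTrans (m : ℕ) (x : ℕ → ℝ) (n : ℕ) : ℝ :=
  ∑ k ∈ Finset.range (n + 1), hMat m n k * x k

/-- `h_0(Δ^(m))`: sequences whose `H^(m)`-transform tends to `0`. -/
def hZero (m : ℕ) : Set (ℕ → ℝ) := {x | Tendsto (hTrans m x) atTop (𝓝 0)}

/-- `h_c(Δ^(m))`: sequences whose `H^(m)`-transform converges. -/
def hConv (m : ℕ) : Set (ℕ → ℝ) := {x | ∃ L : ℝ, Tendsto (hTrans m x) atTop (𝓝 L)}

/-- `h_∞(Δ^(m))`: sequences whose `H^(m)`-transform is bounded. -/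
def hBdd (m : ℕ) : Set (ℕ → ℝ) := {x | ∃ M : ℝ, ∀ n, |hTrans m x n| ≤ M}

/-- The space `c₀` of null real sequences. -/
def c0Seq : Set (ℕ → ℝ) := {y | Tendsto y atTop (𝓝 0)}

/-- The space `c` of convergent real sequences. -/
def cSeq : Set (ℕ → ℝ) := {y | ∃ L : ℝ, Tendsto y atTop (𝓝 L)}

/-- The space `ℓ∞` of bounded real sequences. -/
def linfSeq : Set (ℕ → ℝ) := {y | ∃ M : ℝ, ∀ n, |y n| ≤ M}

/-- The sup norm `‖y‖ = sup_n |y_n|` of a sequence. -/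
noncomputable def supNorm (y : ℕ → ℝ) : ℝ := ⨆ n, |y n|

/-- The norm `‖x‖ = sup_n |(H^(m) x)_n|` on the Hilbert difference sequence spaces. -/
noncomputable def hNorm (m : ℕ) (x : ℕ → ℝ) : ℝ := supNorm (hTrans m x)

/-! `H^(m)` is an infinite lower-triangular matrix whose diagonal entries `1/(2n-1)` never vanish,
so forward substitution inverts it on all real sequences. Hence it maps `h_0(Δ^(m))`, the preimage
of `c₀`, bijectively onto `c₀`, and it is isometric because the norm of `h_0(Δ^(m))` is the sup
norm of the transform. -/

section LowerTriangular

variable {K : Type*} [Field K] (a : ℕ → ℕ → K)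

def lowerTriangularTransform (x : ℕ → K) (n : ℕ) : K :=
  ∑ k ∈ range (n + 1), a n k * x k

theorem lowerTriangularTransform_linear_comb (c d : K) (x y : ℕ → K) :
    lowerTriangularTransform a (fun k => c * x k + d * y k) =
      fun n => c * lowerTriangularTransform a x n + d * lowerTriangularTransform a y n := by
  funext n
  simp only [lowerTriangularTransform, mul_sum, ← sum_add_distrib]
  exact sum_congr rfl fun k _ => by ring

noncomputable def forwardSubst (y : ℕ → K) : ℕ → K
  | n => (y n - ∑ k ∈ (range n).attach, a n k * forwardSubst y k) / a n n
decreasing_by exact mem_range.mp k.2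

variable {a}

theorem lowerTriangularTransform_forwardSubst (ha : ∀ n, a n n ≠ 0) (y : ℕ → K) :
    lowerTriangularTransform a (forwardSubst a y) = y := by
  funext n
  rw [lowerTriangularTransform, sum_range_succ, forwardSubst,
    sum_attach (range n) (fun k => a n k * forwardSubst a y k)]
  field_simp [ha n]
  ring

theorem forwardSubst_lowerTriangularTransform (ha : ∀ n, a n n ≠ 0) (x : ℕ → K) :
    forwardSubst a (lowerTriangularTransform a x) = x := by
  funext n
  induction n using Nat.strong_induction_on with
  | _ n ih =>
    have hprev : ∑ k ∈ (range n).attach, a n k * forwardSubst a (lowerTriangularTransform a x) k =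
        ∑ k ∈ range n, a n k * x k := by
      rw [← sum_attach (range n) (fun k => a n k * x k)]
      exact sum_congr rfl fun k _ => by rw [ih k (mem_range.mp k.2)]
    rw [forwardSubst, hprev, lowerTriangularTransform, sum_range_succ]
    field_simp [ha n]
    ring

theorem bijective_lowerTriangularTransform (ha : ∀ n, a n n ≠ 0) :
    Function.Bijective (lowerTriangularTransform a) :=
  Function.bijective_iff_has_inverse.mpr ⟨forwardSubst a,
    forwardSubst_lowerTriangularTransform ha, lowerTriangularTransform_forwardSubst ha⟩

end LowerTriangular

theorem hTrans_eq_lowerTriangularTransform (m : ℕ) :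
    hTrans m = lowerTriangularTransform (hMat m) := rfl

theorem hZero_eq_preimage (m : ℕ) : hZero m = hTrans m ⁻¹' c0Seq := rfl

theorem hMat_self (m n : ℕ) : hMat m n n = ((n + n + 1 : ℕ) : ℝ)⁻¹ := by
  simp [hMat]

theorem hMat_self_ne_zero (m n : ℕ) : hMat m n n ≠ 0 := by
  rw [hMat_self]
  positivity

theorem hilbert_diff_h0_iso_c0_general (m : ℕ) :
    (∀ (a b : ℝ) (x y : ℕ → ℝ),
      hTrans m (fun k => a * x k + b * y k) = fun n => a * hTrans m x n + b * hTrans m y n) ∧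
    Set.BijOn (hTrans m) (hZero m) c0Seq ∧
    (∀ x ∈ hZero m, hNorm m x = supNorm (hTrans m x)) := by
  rw [hZero_eq_preimage, hTrans_eq_lowerTriangularTransform]
  exact ⟨lowerTriangularTransform_linear_comb (hMat m),
    (bijective_lowerTriangularTransform (hMat_self_ne_zero m)).bijOn_preimage,
    fun _ _ => rfl⟩

/-- The map `T x = H^(m) x` is a linear, norm-preserving bijection from `hZero m` onto `c0Seq`. -/
theorem hilbert_diff_h0_iso_c0 (m : ℕ) (hm : 1 ≤ m) :
    (∀ (a b : ℝ) (x y : ℕ → ℝ),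
      hTrans m (fun k => a * x k + b * y k) = fun n => a * hTrans m x n + b * hTrans m y n) ∧
    Set.BijOn (hTrans m) (hZero m) c0Seq ∧
    (∀ x ∈ hZero m, hNorm m x = supNorm (hTrans m x)) :=
  hilbert_diff_h0_iso_c0_general m
end

section
/- For every integer m ≥ 1, the sequences b^(k) (k ≥ 1), where b^(k) is the k-th column of the inverse triangle B of H^(m) (so that H^(m)b^(k) is the k-th standard unit sequence e^(k)), form a Schauder basis of h_0(Δ^(m)) equipped with the norm ‖x‖ = sup_n |(H^(m)x)_n|: every x ∈ h_0(Δ^(m)) has a representation x = Σ_k λ_k b^(k) with the partial sums converging to x in this norm, the scalars λ_k are uniquely determined, and λ_k = (H^(m)x)_k for all k. -/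
open Filter Finset Topology

/-!
`H^(m)` is a triangle with inverse `B`, so `H^(m)` maps the partial sum `∑_{k ≤ K} λ_k b^(k)`
to the truncation `(λ_0, …, λ_K, 0, 0, …)`. The norm of `x - ∑_{k ≤ K} λ_k b^(k)` is therefore
the sup norm of `H^(m) x` minus that truncation, and the theorem becomes the statement that the
unit sequences form a Schauder basis of `c₀` with coordinate functionals `y ↦ y_k`.
-/

lemma supNorm_nonneg (y : ℕ → ℝ) : 0 ≤ supNorm y :=
  Real.iSup_nonneg fun n => abs_nonneg (y n)

lemma supNorm_le {y : ℕ → ℝ} {ε : ℝ} (h : ∀ n, |y n| ≤ ε) : supNorm y ≤ ε :=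
  ciSup_le h

lemma abs_le_supNorm {y : ℕ → ℝ} (hy : BddAbove (Set.range fun n => |y n|)) (n : ℕ) :
    |y n| ≤ supNorm y :=
  le_ciSup hy n

lemma tendsto_supNorm_sub_truncation {y : ℕ → ℝ} (hy : Tendsto y atTop (𝓝 0)) :
    Tendsto (fun K => supNorm fun n => y n - if n ≤ K then y n else 0) atTop (𝓝 0) := by
  rw [Metric.tendsto_atTop] at hy ⊢
  intro ε hε
  obtain ⟨N, hN⟩ := hy (ε / 2) (half_pos hε)
  refine ⟨N, fun K hK => ?_⟩
  have htail : ∀ n, |y n - if n ≤ K then y n else 0| ≤ ε / 2 := fun n => by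
    by_cases hn : n ≤ K
    · simp only [hn, if_true, sub_self, abs_zero]
      positivity
    · simpa only [hn, if_false, sub_zero, Real.dist_eq] using (hN n (by omega)).le
  rw [Real.dist_eq, sub_zero, abs_of_nonneg (supNorm_nonneg _)]
  linarith [supNorm_le htail]

lemma eq_of_tendsto_supNorm_sub_truncation {y lam : ℕ → ℝ}
    (hy : BddAbove (Set.range fun n => |y n|))
    (h : Tendsto (fun K => supNorm fun n => y n - if n ≤ K then lam n else 0) atTop (𝓝 0)) :
    lam = y := by
  obtain ⟨C, hC⟩ := hy
  funext k
  suffices hk : |y k - lam k| ≤ 0 by linarith [abs_nonpos_iff.mp hk]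
  refine ge_of_tendsto h (eventually_atTop.mpr ⟨k, fun K hK => ?_⟩)
  have hbdd : BddAbove (Set.range fun n => |y n - if n ≤ K then lam n else 0|) := by
    refine ⟨C + ∑ j ∈ range (K + 1), |lam j|, ?_⟩
    rintro _ ⟨n, rfl⟩
    have hlam : |if n ≤ K then lam n else 0| ≤ ∑ j ∈ range (K + 1), |lam j| := by
      split_ifs with hn
      · exact single_le_sum (fun j _ => abs_nonneg (lam j)) (mem_range.mpr (by omega))
      · simpa using sum_nonneg fun j _ => abs_nonneg (lam j)
    linarith [abs_sub (y n) (if n ≤ K then lam n else 0), hC ⟨n, rfl⟩]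
  simpa only [hK, if_true] using abs_le_supNorm hbdd k

lemma sum_range_mul_eq_sum_Icc_of_lowerTriangular (A B : ℕ → ℕ → ℝ)
    (hBtri : ∀ n k : ℕ, n < k → B n k = 0) (n k : ℕ) :
    ∑ j ∈ range (n + 1), A n j * B j k = ∑ j ∈ Icc k n, A n j * B j k := by
  refine (sum_subset (fun j hj => ?_) fun j hj hj' => ?_).symm
  · simp only [mem_Icc] at hj
    exact mem_range.mpr (by omega)
  · simp only [mem_range, mem_Icc, not_and_or, not_le] at hj hj'
    rw [hBtri j k (by omega), mul_zero]

lemma hTrans_sub (m : ℕ) (x y : ℕ → ℝ) (n : ℕ) :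
    hTrans m (x - y) n = hTrans m x n - hTrans m y n := by
  simp only [hTrans, Pi.sub_apply, mul_sub, sum_sub_distrib]

lemma hTrans_sum_mul_col (m : ℕ) (B : ℕ → ℕ → ℝ)
    (hBtri : ∀ n k : ℕ, n < k → B n k = 0)
    (hBright : ∀ n k : ℕ, (∑ j ∈ Icc k n, hMat m n j * B j k) = if n = k then 1 else 0)
    (lam : ℕ → ℝ) (K n : ℕ) :
    hTrans m (fun n => ∑ k ∈ range (K + 1), lam k * B n k) n
      = if n ≤ K then lam n else 0 := by
  calc hTrans m (fun n => ∑ k ∈ range (K + 1), lam k * B n k) n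
      = ∑ k ∈ range (K + 1), lam k * ∑ j ∈ range (n + 1), hMat m n j * B j k := by
        simp only [hTrans, mul_sum]
        rw [sum_comm]
        exact sum_congr rfl fun _ _ => sum_congr rfl fun _ _ => by ring
    _ = ∑ k ∈ range (K + 1), if n = k then lam k else 0 := by
        refine sum_congr rfl fun k _ => ?_
        rw [sum_range_mul_eq_sum_Icc_of_lowerTriangular _ B hBtri, hBright, mul_ite, mul_one,
          mul_zero]
    _ = if n ≤ K then lam n else 0 := by
        simp

theorem hilbert_diff_h0_basis_general (m : ℕ)
    (B : ℕ → ℕ → ℝ)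
    (hBtri : ∀ n k : ℕ, n < k → B n k = 0)
    (hBright : ∀ n k : ℕ, (∑ j ∈ Finset.Icc k n, hMat m n j * B j k) = if n = k then 1 else 0) :
    ∀ x ∈ hZero m,
      Tendsto (fun K => hNorm m
          (x - (fun n => ∑ k ∈ Finset.range (K + 1), hTrans m x k * B n k))) atTop (𝓝 0) ∧
      ∀ lam : ℕ → ℝ,
        Tendsto (fun K => hNorm m
            (x - (fun n => ∑ k ∈ Finset.range (K + 1), lam k * B n k))) atTop (𝓝 0) →
        lam = fun k => hTrans m x k := by
  intro x hx
  have hremainder : ∀ lam : ℕ → ℝ, (fun K => hNorm m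
      (x - fun n => ∑ k ∈ range (K + 1), lam k * B n k))
        = fun K => supNorm fun n => hTrans m x n - if n ≤ K then lam n else 0 := by
    intro lam
    funext K
    refine congrArg supNorm (funext fun n => ?_)
    rw [hTrans_sub, hTrans_sum_mul_col m B hBtri hBright]
  refine ⟨?_, fun lam hlam => ?_⟩
  · rw [hremainder]
    exact tendsto_supNorm_sub_truncation hx
  · rw [hremainder] at hlam
    exact eq_of_tendsto_supNorm_sub_truncation hx.abs.bddAbove_range hlam

/-- The columns `b^(k) = (B n k)_n` of the inverse triangle `B` of `H^(m)` form a Schauder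
basis of `h_0(Δ^(m))` for the norm `‖x‖ = sup_n |(H^(m) x)_n|`, with coefficients
`λ_k = (H^(m) x)_k`. -/
theorem hilbert_diff_h0_basis (m : ℕ) (hm : 1 ≤ m)
    (B : ℕ → ℕ → ℝ)
    (hBtri : ∀ n k : ℕ, n < k → B n k = 0)
    (hBright : ∀ n k : ℕ, (∑ j ∈ Finset.Icc k n, hMat m n j * B j k) = if n = k then 1 else 0)
    (hBleft : ∀ n k : ℕ, (∑ j ∈ Finset.Icc k n, B n j * hMat m j k) = if n = k then 1 else 0) :
    ∀ x ∈ hZero m,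
      Tendsto (fun K => hNorm m
          (x - (fun n => ∑ k ∈ Finset.range (K + 1), hTrans m x k * B n k))) atTop (𝓝 0) ∧
      ∀ lam : ℕ → ℝ,
        Tendsto (fun K => hNorm m
            (x - (fun n => ∑ k ∈ Finset.range (K + 1), lam k * B n k))) atTop (𝓝 0) →
        lam = fun k => hTrans m x k :=
  hilbert_diff_h0_basis_general m B hBtri hBright
end

section
/- Fix an integer m ≥ 1 and a real sequence a = (a_k). Define the lower-triangular matrix V = (v_{nk}) by v_{nk} = Σ_{j=k}^{n} a_j B_{jk} for 1 ≤ k ≤ n, where B is the inverse triangle of H^(m). Then a belongs to the β-dual of h_0(Δ^(m)) — i.e. the series Σ_k a_k x_k converges for every x ∈ h_0(Δ^(m)) — if and only if V ∈ (c₀ : c), i.e. for every null sequence y the sequence ((Vy)_n)_n = (Σ_{k=1}^{n} v_{nk} y_k)_n converges. -/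
open Filter Finset Topology

/-!
`H^(m)` and `B` are mutually inverse triangles, so `x ↦ H^(m) x` is a bijection from
`h_0(Δ^(m))` onto `c₀` with inverse `y ↦ B y`. Writing `x = B y`, the partial sum
`∑_{k ≤ n} a_k x_k` is the `n`-th row of the product of the triangle with rows `(a_0, …, a_n)`
and `B`, applied to `y`, which is exactly `(V y)_n`.
-/

section LowerTriangular

variable {R : Type*} [Semiring R]

lemma sum_range_sum_range_succ_comm {M : Type*} [AddCommMonoid M] (n : ℕ) (f : ℕ → ℕ → M) :
    ∑ k ∈ range (n + 1), ∑ j ∈ range (k + 1), f k j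
      = ∑ j ∈ range (n + 1), ∑ k ∈ Icc j n, f k j := by
  apply sum_comm'
  intro k j
  simp only [mem_range, mem_Icc]
  omega

def lowerTransform (A : ℕ → ℕ → R) (x : ℕ → R) (n : ℕ) : R :=
  ∑ k ∈ range (n + 1), A n k * x k

def lowerMul (A C : ℕ → ℕ → R) (n k : ℕ) : R :=
  ∑ j ∈ Icc k n, A n j * C j k

lemma lowerTransform_lowerTransform (A C : ℕ → ℕ → R) (y : ℕ → R) (n : ℕ) :
    lowerTransform A (lowerTransform C y) n = lowerTransform (lowerMul A C) y n := by
  simp only [lowerTransform, lowerMul, mul_sum, sum_mul, mul_assoc]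
  exact sum_range_sum_range_succ_comm n fun k j => A n k * (C k j * y j)

lemma lowerTransform_lowerTransform_of_lowerMul_eq
    {A C : ℕ → ℕ → R} (hAC : ∀ n k, lowerMul A C n k = if n = k then 1 else 0) (y : ℕ → R) :
    lowerTransform A (lowerTransform C y) = y := by
  funext n
  rw [lowerTransform_lowerTransform]
  simp [lowerTransform, hAC]

end LowerTriangular

theorem hilbert_diff_betaDual_h0_general (m : ℕ) (a : ℕ → ℝ)
    (B : ℕ → ℕ → ℝ)
    (hBright : ∀ n k : ℕ, (∑ j ∈ Finset.Icc k n, hMat m n j * B j k) = if n = k then 1 else 0)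
    (hBleft : ∀ n k : ℕ, (∑ j ∈ Finset.Icc k n, B n j * hMat m j k) = if n = k then 1 else 0) :
    (∀ x ∈ hZero m, ∃ L : ℝ,
        Tendsto (fun K => ∑ k ∈ Finset.range K, a k * x k) atTop (𝓝 L)) ↔
    (∀ y ∈ c0Seq, ∃ L : ℝ,
        Tendsto (fun n => ∑ k ∈ Finset.range (n + 1),
          (∑ j ∈ Finset.Icc k n, a j * B j k) * y k) atTop (𝓝 L)) := by
  have hHB (y : ℕ → ℝ) : hTrans m (lowerTransform B y) = y :=
    lowerTransform_lowerTransform_of_lowerMul_eq hBright y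
  have hBH (x : ℕ → ℝ) : lowerTransform B (hTrans m x) = x :=
    lowerTransform_lowerTransform_of_lowerMul_eq hBleft x
  have hV (y : ℕ → ℝ) (n : ℕ) :
      ∑ k ∈ range (n + 1), (∑ j ∈ Icc k n, a j * B j k) * y k
        = ∑ k ∈ range (n + 1), a k * lowerTransform B y k :=
    (lowerTransform_lowerTransform (fun _ k => a k) B y n).symm
  simp only [hV, ← tendsto_add_atTop_iff_nat (f := fun K => ∑ k ∈ range K, a k * _) 1]
  constructor
  · intro h y hy
    refine h (lowerTransform B y) ?_
    show Tendsto (hTrans m _) atTop (𝓝 0)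
    rwa [hHB]
  · intro h x hx
    simpa [hBH] using h (hTrans m x) hx

/-- `a` is in the β-dual of `hZero m` iff the matrix `V`, `v_{nk} = ∑_{j=k}^n a_j B_{jk}`,
maps `c0Seq` into the convergent sequences. -/
theorem hilbert_diff_betaDual_h0 (m : ℕ) (hm : 1 ≤ m) (a : ℕ → ℝ)
    (B : ℕ → ℕ → ℝ)
    (hBtri : ∀ n k : ℕ, n < k → B n k = 0)
    (hBright : ∀ n k : ℕ, (∑ j ∈ Finset.Icc k n, hMat m n j * B j k) = if n = k then 1 else 0)
    (hBleft : ∀ n k : ℕ, (∑ j ∈ Finset.Icc k n, B n j * hMat m j k) = if n = k then 1 else 0) :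
    (∀ x ∈ hZero m, ∃ L : ℝ,
        Tendsto (fun K => ∑ k ∈ Finset.range K, a k * x k) atTop (𝓝 L)) ↔
    (∀ y ∈ c0Seq, ∃ L : ℝ,
        Tendsto (fun n => ∑ k ∈ Finset.range (n + 1),
          (∑ j ∈ Finset.Icc k n, a j * B j k) * y k) atTop (𝓝 L)) :=
  hilbert_diff_betaDual_h0_general m a B hBright hBleft
end

section
/- Fix an integer m ≥ 1 and a real sequence a = (a_k). Define the lower-triangular matrix V = (v_{nk}) by v_{nk} = Σ_{j=k}^{n} a_j B_{jk} for 1 ≤ k ≤ n, where B is the inverse triangle of H^(m). Then a belongs to the β-dual of h_∞(Δ^(m)) — i.e. the series Σ_k a_k x_k converges for every x ∈ h_∞(Δ^(m)) — if and only if V ∈ (ℓ∞ : c), i.e. for every bounded sequence y the sequence ((Vy)_n)_n = (Σ_{k=1}^{n} v_{nk} y_k)_n converges. -/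
open Filter Finset Topology

/- Since `B` is a two-sided inverse of the triangle `H^(m)`, the map `x ↦ H^(m) x` is a bijection
from `h_∞(Δ^(m))` onto `ℓ∞` with inverse `y ↦ B y`. Exchanging the order of the finite sums,
`(V y)_n = ∑_{j ≤ n} a_j (B y)_j` is the `n`-th partial sum of `∑ a_k x_k` for `x = B y`, so the
two convergence conditions are the same statement about corresponding sequences. -/

def lowerMulVec {R : Type*} [Semiring R] (A : ℕ → ℕ → R) (x : ℕ → R) (n : ℕ) : R :=
  ∑ k ∈ range (n + 1), A n k * x k

section LowerTriangular

variable {R : Type*} [Semiring R]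

theorem sum_range_sum_Icc_comm (f : ℕ → ℕ → R) (n : ℕ) :
    ∑ k ∈ range (n + 1), ∑ j ∈ Icc k n, f j k = ∑ j ∈ range (n + 1), ∑ k ∈ range (j + 1), f j k :=
  sum_comm' fun k j => by simp only [mem_range, mem_Icc]; omega

theorem lowerMulVec_lowerMulVec (A B : ℕ → ℕ → R) (y : ℕ → R) (n : ℕ) :
    lowerMulVec A (lowerMulVec B y) n =
      ∑ k ∈ range (n + 1), (∑ j ∈ Icc k n, A n j * B j k) * y k := by
  simp only [lowerMulVec, mul_sum, sum_mul, mul_assoc]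
  exact (sum_range_sum_Icc_comm (fun j k => A n j * (B j k * y k)) n).symm

theorem lowerMulVec_lowerMulVec_of_inv {A B : ℕ → ℕ → R}
    (hAB : ∀ n k, ∑ j ∈ Icc k n, A n j * B j k = if n = k then 1 else 0) (y : ℕ → R) :
    lowerMulVec A (lowerMulVec B y) = y := by
  funext n
  simp [lowerMulVec_lowerMulVec, hAB]

end LowerTriangular

theorem hilbert_diff_betaDual_hinf_general (m : ℕ) (a : ℕ → ℝ)
    (B : ℕ → ℕ → ℝ)
    (hBright : ∀ n k : ℕ, (∑ j ∈ Finset.Icc k n, hMat m n j * B j k) = if n = k then 1 else 0)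
    (hBleft : ∀ n k : ℕ, (∑ j ∈ Finset.Icc k n, B n j * hMat m j k) = if n = k then 1 else 0) :
    (∀ x ∈ hBdd m, ∃ L : ℝ,
        Tendsto (fun K => ∑ k ∈ Finset.range K, a k * x k) atTop (𝓝 L)) ↔
    (∀ y ∈ linfSeq, ∃ L : ℝ,
        Tendsto (fun n => ∑ k ∈ Finset.range (n + 1),
          (∑ j ∈ Finset.Icc k n, a j * B j k) * y k) atTop (𝓝 L)) := by
  have hTrans_eq : hTrans m = lowerMulVec (hMat m) := rfl
  have hV (y : ℕ → ℝ) (n : ℕ) : ∑ k ∈ range (n + 1), (∑ j ∈ Icc k n, a j * B j k) * y k =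
      ∑ k ∈ range (n + 1), a k * lowerMulVec B y k :=
    (lowerMulVec_lowerMulVec (fun _ j => a j) B y n).symm
  simp only [hV, ← tendsto_add_atTop_iff_nat (f := fun K => ∑ k ∈ range K, _) 1]
  constructor
  · rintro H y ⟨M, hM⟩
    refine H (lowerMulVec B y) ⟨M, fun n => ?_⟩
    rw [hTrans_eq, lowerMulVec_lowerMulVec_of_inv hBright]
    exact hM n
  · rintro H x ⟨M, hM⟩
    rw [← lowerMulVec_lowerMulVec_of_inv hBleft x]
    exact H (hTrans m x) ⟨M, hM⟩

/-- `a` is in the β-dual of `hBdd m` iff the matrix `V`, `v_{nk} = ∑_{j=k}^n a_j B_{jk}`,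
maps `linfSeq` into the convergent sequences. -/
theorem hilbert_diff_betaDual_hinf (m : ℕ) (hm : 1 ≤ m) (a : ℕ → ℝ)
    (B : ℕ → ℕ → ℝ)
    (hBtri : ∀ n k : ℕ, n < k → B n k = 0)
    (hBright : ∀ n k : ℕ, (∑ j ∈ Finset.Icc k n, hMat m n j * B j k) = if n = k then 1 else 0)
    (hBleft : ∀ n k : ℕ, (∑ j ∈ Finset.Icc k n, B n j * hMat m j k) = if n = k then 1 else 0) :
    (∀ x ∈ hBdd m, ∃ L : ℝ,
        Tendsto (fun K => ∑ k ∈ Finset.range K, a k * x k) atTop (𝓝 L)) ↔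
    (∀ y ∈ linfSeq, ∃ L : ℝ,
        Tendsto (fun n => ∑ k ∈ Finset.range (n + 1),
          (∑ j ∈ Finset.Icc k n, a j * B j k) * y k) atTop (𝓝 L)) :=
  hilbert_diff_betaDual_hinf_general m a B hBright hBleft
end

section
/- Fix an integer m ≥ 1 and a real sequence a = (a_k). Define the lower-triangular matrix V = (v_{nk}) by v_{nk} = Σ_{j=k}^{n} a_j B_{jk} for 1 ≤ k ≤ n, where B is the inverse triangle of H^(m). Then a belongs to the γ-dual of h_0(Δ^(m)) — i.e. the partial sums Σ_{k=1}^{n} a_k x_k are bounded in n for every x ∈ h_0(Δ^(m)) — if and only if V ∈ (c₀ : ℓ∞), i.e. for every null sequence y the sequence ((Vy)_n)_n = (Σ_{k=1}^{n} v_{nk} y_k)_n is bounded. -/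
open Filter Finset Topology

private lemma triSwap (n : ℕ) (f : ℕ → ℕ → ℝ) :
    ∑ k ∈ Finset.range (n+1), ∑ j ∈ Finset.range (k+1), f k j
      = ∑ j ∈ Finset.range (n+1), ∑ k ∈ Finset.Icc j n, f k j := by
  refine Finset.sum_comm' ?_
  intro k j
  simp only [Finset.mem_range, Finset.mem_Icc, Nat.lt_succ_iff]
  omega

private lemma lemA (m : ℕ) (B : ℕ → ℕ → ℝ)
    (hBright : ∀ n k : ℕ, (∑ j ∈ Finset.Icc k n, hMat m n j * B j k) = if n = k then 1 else 0)
    (y : ℕ → ℝ) (n : ℕ) :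
    hTrans m (fun k => ∑ j ∈ Finset.range (k+1), B k j * y j) n = y n := by
  unfold hTrans
  simp only [Finset.mul_sum]
  rw [triSwap]
  have h : ∀ j ∈ Finset.range (n+1),
      (∑ k ∈ Finset.Icc j n, hMat m n k * (B k j * y j))
        = (if n = j then 1 else 0) * y j := by
    intro j _
    rw [← hBright n j, Finset.sum_mul]
    exact Finset.sum_congr rfl fun k _ => by ring
  rw [Finset.sum_congr rfl h]
  simp

private lemma lemB (m : ℕ) (B : ℕ → ℕ → ℝ)
    (hBleft : ∀ n k : ℕ, (∑ j ∈ Finset.Icc k n, B n j * hMat m j k) = if n = k then 1 else 0)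
    (x : ℕ → ℝ) (k : ℕ) :
    ∑ j ∈ Finset.range (k+1), B k j * hTrans m x j = x k := by
  unfold hTrans
  simp only [Finset.mul_sum]
  rw [triSwap]
  have h : ∀ i ∈ Finset.range (k+1),
      (∑ j ∈ Finset.Icc i k, B k j * (hMat m j i * x i))
        = (if k = i then 1 else 0) * x i := by
    intro i _
    rw [← hBleft k i, Finset.sum_mul]
    exact Finset.sum_congr rfl fun j _ => by ring
  rw [Finset.sum_congr rfl h]
  simp

private lemma lemC (a : ℕ → ℝ) (B : ℕ → ℕ → ℝ) (y : ℕ → ℝ) (n : ℕ) :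
    ∑ k ∈ Finset.range (n+1), a k * (∑ j ∈ Finset.range (k+1), B k j * y j)
      = ∑ k ∈ Finset.range (n+1), (∑ j ∈ Finset.Icc k n, a j * B j k) * y k := by
  simp only [Finset.mul_sum]
  rw [triSwap]
  refine Finset.sum_congr rfl fun k _ => ?_
  rw [Finset.sum_mul]
  exact Finset.sum_congr rfl fun j _ => by ring

/-- `a` is in the γ-dual of `hZero m` iff the matrix `V`, `v_{nk} = ∑_{j=k}^n a_j B_{jk}`,
maps `c0Seq` into the bounded sequences. -/
theorem hilbert_diff_gammaDual_h0 (m : ℕ) (hm : 1 ≤ m) (a : ℕ → ℝ)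
    (B : ℕ → ℕ → ℝ)
    (hBtri : ∀ n k : ℕ, n < k → B n k = 0)
    (hBright : ∀ n k : ℕ, (∑ j ∈ Finset.Icc k n, hMat m n j * B j k) = if n = k then 1 else 0)
    (hBleft : ∀ n k : ℕ, (∑ j ∈ Finset.Icc k n, B n j * hMat m j k) = if n = k then 1 else 0) :
    (∀ x ∈ hZero m, ∃ M : ℝ, ∀ n : ℕ,
        |∑ k ∈ Finset.range (n + 1), a k * x k| ≤ M) ↔
    (∀ y ∈ c0Seq, ∃ M : ℝ, ∀ n : ℕ,
        |∑ k ∈ Finset.range (n + 1),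
          (∑ j ∈ Finset.Icc k n, a j * B j k) * y k| ≤ M) := by
  constructor
  · intro H y hy
    set x : ℕ → ℝ := fun k => ∑ j ∈ Finset.range (k+1), B k j * y j with hxdef
    have hxz : x ∈ hZero m := by
      have : hTrans m x = y := funext (lemA m B hBright y)
      simpa [hZero, c0Seq, this] using hy
    obtain ⟨M, hM⟩ := H x hxz
    refine ⟨M, fun n => ?_⟩
    rw [← lemC a B y n]
    exact hM n
  · intro H x hx
    set y : ℕ → ℝ := hTrans m x with hydef
    obtain ⟨M, hM⟩ := H y hx
    refine ⟨M, fun n => ?_⟩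
    have hx' : ∀ k, x k = ∑ j ∈ Finset.range (k+1), B k j * y j := by
      intro k; rw [hydef]; exact (lemB m B hBleft x k).symm
    calc |∑ k ∈ Finset.range (n + 1), a k * x k|
        = |∑ k ∈ Finset.range (n + 1),
            (∑ j ∈ Finset.Icc k n, a j * B j k) * y k| := by
          rw [← lemC a B y n]
          congr 1
          exact Finset.sum_congr rfl fun k _ => by rw [hx' k]
      _ ≤ M := hM n
end

section
/- Fix an integer m ≥ 1, an arbitrary set Y of real sequences, and an infinite matrix A = (a_{nk}). Suppose that for each n and k the series d_{nk} = Σ_{j=k}^{∞} a_{nj} B_{jk} converges, where B is the inverse triangle of H^(m), and let D = (d_{nk}). Then A ∈ (h_∞(Δ^(m)) : Y) if and only if the n-th row (a_{nk})_k of A belongs to the β-dual of h_∞(Δ^(m)) for every n and D ∈ (ℓ∞ : Y). -/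
open Filter Finset Topology

/-- `A ∈ (X : Y)`: for every `x ∈ X` each row-series `∑_k a_{nk} x_k` converges and the
sequence of the sums belongs to `Y`. -/
def matClass (A : ℕ → ℕ → ℝ) (X Y : Set (ℕ → ℝ)) : Prop :=
  ∀ x ∈ X, ∃ Ax : ℕ → ℝ,
    (∀ n, Tendsto (fun K => ∑ k ∈ Finset.range K, A n k * x k) atTop (𝓝 (Ax n))) ∧ Ax ∈ Y

/-- The β-dual of a set of real sequences. -/
def betaDual (X : Set (ℕ → ℝ)) : Set (ℕ → ℝ) :=
  {a | ∀ x ∈ X, ∃ L : ℝ, Tendsto (fun K => ∑ k ∈ Finset.range K, a k * x k) atTop (𝓝 L)}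


/-
Put `y = H^(m) x`. Since `B` is the inverse triangle, `x = B y`, and `x ∈ h_∞(Δ^(m))` exactly
when `y ∈ ℓ∞`. Exchanging the order of summation, the partial sums of `∑_j a_{nj} x_j` become
`∑_{k ≤ J} s_{Jk} y_k` with `s_{Jk} = ∑_{j=k}^{J} a_{nj} B_{jk} → d_{nk}`. Hence the n-th row of `A`
lies in the β-dual of `h_∞(Δ^(m))` iff the triangle `(s_{Jk})` maps `ℓ∞` into `c`, and then, by
Schur's theorem, the limit is `∑_k d_{nk} y_k`. Schur's theorem follows from the uniform
boundedness principle, which makes `(d_{nk})_k` absolutely summable, and a gliding hump argument,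
which identifies the limit.
-/

def triTransform (P : ℕ → ℕ → ℝ) (x : ℕ → ℝ) (n : ℕ) : ℝ :=
  ∑ k ∈ range (n + 1), P n k * x k

lemma hTrans_eq_triTransform (m : ℕ) : hTrans m = triTransform (hMat m) := rfl

lemma sum_range_mul_triTransform (a : ℕ → ℝ) (Q : ℕ → ℕ → ℝ) (y : ℕ → ℝ) (J : ℕ) :
    ∑ j ∈ range (J + 1), a j * triTransform Q y j =
      triTransform (fun J k => ∑ j ∈ Icc k J, a j * Q j k) y J := by
  simp only [triTransform, mul_sum, sum_mul, mul_assoc]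
  exact sum_comm' fun j k => by simp only [mem_range, mem_Icc]; omega

lemma triTransform_triTransform_of_inverse {P Q : ℕ → ℕ → ℝ}
    (hPQ : ∀ n k, ∑ j ∈ Icc k n, P n j * Q j k = if n = k then 1 else 0) (y : ℕ → ℝ) :
    triTransform P (triTransform Q y) = y := by
  funext n
  rw [triTransform, sum_range_mul_triTransform]
  simp [triTransform, hPQ]

lemma abs_sum_mul_le {ι : Type*} (s : Finset ι) (a : ι → ℝ) {w : ι → ℝ} {C : ℝ}
    (hw : ∀ k, |w k| ≤ C) : |∑ k ∈ s, a k * w k| ≤ (∑ k ∈ s, |a k|) * C := by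
  rw [sum_mul]
  refine (abs_sum_le_sum_abs _ _).trans (sum_le_sum fun k _ => ?_)
  rw [abs_mul]
  exact mul_le_mul_of_nonneg_left (hw k) (abs_nonneg _)

lemma cSeq_subset_linfSeq : cSeq ⊆ linfSeq := by
  rintro y ⟨L, hL⟩
  obtain ⟨C, hC⟩ := hL.abs.bddAbove_range
  exact ⟨C, fun n => hC ⟨n, rfl⟩⟩

theorem exists_sum_abs_le_of_triTransform_mem_linfSeq {S : ℕ → ℕ → ℝ}
    (hS : ∀ y ∈ linfSeq, triTransform S y ∈ linfSeq) :
    ∃ M, ∀ J, ∑ k ∈ range (J + 1), |S J k| ≤ M := by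
  let φ : ℕ → BoundedContinuousFunction ℕ ℝ →L[ℝ] ℝ := fun J =>
    ∑ k ∈ range (J + 1), S J k • BoundedContinuousFunction.evalCLM ℝ k
  have hφ : ∀ J f, φ J f = triTransform S f J := fun J f => by simp [φ, triTransform]
  obtain ⟨M, hM⟩ := banach_steinhaus (g := φ) fun f => by
    obtain ⟨C, hC⟩ := hS f ⟨‖f‖, f.norm_coe_le_norm⟩
    exact ⟨C, fun J => by rw [hφ, Real.norm_eq_abs]; exact hC J⟩
  refine ⟨M, fun J => ?_⟩
  have hsign : ∀ k, ‖(SignType.sign (S J k) : ℝ)‖ ≤ 1 := fun k => by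
    rcases SignType.sign (S J k) with _ | _ | _ <;> simp
  let f : BoundedContinuousFunction ℕ ℝ :=
    .ofNormedAddCommGroupDiscrete (fun k => (SignType.sign (S J k) : ℝ)) 1 hsign
  calc ∑ k ∈ range (J + 1), |S J k| = φ J f := by simp [hφ, triTransform, f]
    _ ≤ ‖φ J‖ * ‖f‖ := (le_abs_self _).trans ((φ J).le_opNorm f)
    _ ≤ M * 1 := mul_le_mul (hM J) ((BoundedContinuousFunction.norm_le zero_le_one).2 hsign)
        (norm_nonneg _) ((norm_nonneg _).trans (hM J))
    _ = M := mul_one M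

lemma card_filter_lt_eq {J : ℕ → ℕ} (hJ : StrictMono J) {i k : ℕ} (hik : J i < k)
    (hki : k ≤ J (i + 1)) : #{i' ∈ range k | J i' < k} = i + 1 := by
  rw [← card_range (i + 1)]
  congr 1
  ext i'
  simp only [mem_filter, mem_range]
  constructor
  · rintro ⟨-, hi'⟩
    exact hJ.lt_iff_lt.1 (hi'.trans_le hki)
  · intro hi'
    have hJi' : J i' < k := (hJ.monotone (Nat.le_of_lt_succ hi')).trans_lt hik
    exact ⟨(hJ.id_le i').trans_lt hJi', hJi'⟩

lemma exists_strictMono_forall_rel_succ {P : ℕ → ℕ → Prop} (h : ∀ p, ∀ᶠ q in atTop, P p q) :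
    ∃ J : ℕ → ℕ, StrictMono J ∧ ∀ i, P (J i) (J (i + 1)) := by
  choose step hstep using fun p => ((eventually_gt_atTop p).and (h p)).exists
  have hsucc : ∀ i, step^[i + 1] 0 = step (step^[i] 0) := fun i =>
    Function.iterate_succ_apply' step i 0
  refine ⟨fun i => step^[i] 0, strictMono_nat_of_lt_succ fun i => ?_, fun i => ?_⟩
  · exact hsucc i ▸ (hstep _).1
  · simpa only [hsucc] using (hstep _).2

lemma not_tendsto_of_abs_sub_neg_one_pow_mul_le {u : ℕ → ℝ} {δ r c : ℝ}
    (hu : ∀ i, |u i - (-1) ^ i * δ| ≤ r) (hr : r < |δ|) : ¬ Tendsto u atTop (𝓝 c) := by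
  intro hc
  obtain ⟨N, hN⟩ := Metric.tendsto_atTop.1 hc (|δ| - r) (by linarith)
  have h₀ := hN N le_rfl
  have h₁ := hN (N + 1) (by omega)
  rw [Real.dist_eq] at h₀ h₁
  have hjump : |(-1) ^ N * δ - (-1) ^ (N + 1) * δ| = 2 * |δ| := by
    rw [show (-1) ^ N * δ - (-1) ^ (N + 1) * δ = (-1) ^ N * (2 * δ) by ring, abs_mul,
      abs_neg_one_pow, one_mul, abs_mul, abs_two]
  linarith [hu N, hu (N + 1), abs_sub_le ((-1) ^ N * δ) (u N) ((-1) ^ (N + 1) * δ),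
    abs_sub_le (u N) c ((-1) ^ (N + 1) * δ), abs_sub_le c (u (N + 1)) ((-1) ^ (N + 1) * δ),
    abs_sub_comm ((-1) ^ N * δ) (u N), abs_sub_comm c (u (N + 1))]

lemma abs_add_neg_one_pow_mul_sub_le {a b c δ ε : ℝ} (i : ℕ) (ha : |a| ≤ ε) (hb : |b| ≤ ε)
    (hbc : |b + c - δ| ≤ ε) : |a + (-1) ^ (i + 1) * c - (-1) ^ i * -δ| ≤ 3 * ε := by
  rw [show a + (-1) ^ (i + 1) * c - (-1) ^ i * -δ = a + (-1) ^ (i + 1) * (b + c - δ - b) by ring]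
  calc _ ≤ |a| + (|b + c - δ| + |b|) := by
        grw [abs_add_le, abs_mul, abs_neg_one_pow, one_mul, abs_sub]
    _ ≤ 3 * ε := by linarith

/-- Gliding hump: if the limit `δ` were nonzero, flipping the sign of `y` on suitable blocks of
indices would make the transform oscillate near `±δ`. -/
theorem tendsto_triTransform_zero_of_tendsto_col_zero {R : ℕ → ℕ → ℝ}
    (hcol : ∀ k, Tendsto (fun J => R J k) atTop (𝓝 0))
    (hR : ∀ z ∈ linfSeq, triTransform R z ∈ cSeq) {y : ℕ → ℝ} (hy : y ∈ linfSeq) :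
    Tendsto (triTransform R y) atTop (𝓝 0) := by
  obtain ⟨δ, hδ⟩ := hR y hy
  obtain rfl | hδ0 := eq_or_ne δ 0
  · exact hδ
  obtain ⟨C, hC⟩ := hy
  have hε : 0 < |δ| / 8 := by positivity
  have hhead : ∀ p, Tendsto (fun q => (∑ k ∈ range (p + 1), |R q k|) * C) atTop (𝓝 0) :=
    fun p => by simpa using (tendsto_finsetSum _ fun k _ => (hcol k).abs).mul_const C
  have hnear : Tendsto (fun q => |triTransform R y q - δ|) atTop (𝓝 0) := by
    simpa using (hδ.sub_const δ).abs
  obtain ⟨J, hJ, hJP⟩ := exists_strictMono_forall_rel_succ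
    (P := fun p q => (∑ k ∈ range (p + 1), |R q k|) * C ≤ |δ| / 8 ∧
      |triTransform R y q - δ| ≤ |δ| / 8) fun p =>
    ((hhead p).eventually (eventually_le_nhds hε)).and (hnear.eventually (eventually_le_nhds hε))
  set z : ℕ → ℝ := fun k => (-1) ^ #{i ∈ range k | J i < k} * y k
  have hz : ∀ k, |z k| ≤ C := fun k => by simpa [z, abs_mul, abs_neg_one_pow] using hC k
  have hsplit : ∀ w i, triTransform R w (J (i + 1)) =
      ∑ k ∈ range (J i + 1), R (J (i + 1)) k * w k +
        ∑ k ∈ Ico (J i + 1) (J (i + 1) + 1), R (J (i + 1)) k * w k := fun w i => by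
    rw [triTransform, sum_range_add_sum_Ico _ (by simpa using (hJ i.lt_add_one).le)]
  have happrox : ∀ i, |triTransform R z (J (i + 1)) - (-1) ^ i * -δ| ≤ 3 * (|δ| / 8) := by
    intro i
    obtain ⟨hhead_i, hy_near⟩ := hJP i
    have hz_head := (abs_sum_mul_le (range (J i + 1)) (R (J (i + 1))) hz).trans hhead_i
    have hy_head := (abs_sum_mul_le (range (J i + 1)) (R (J (i + 1))) hC).trans hhead_i
    have hblock : ∑ k ∈ Ico (J i + 1) (J (i + 1) + 1), R (J (i + 1)) k * z k =
        (-1) ^ (i + 1) * ∑ k ∈ Ico (J i + 1) (J (i + 1) + 1), R (J (i + 1)) k * y k := by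
      rw [mul_sum]
      refine sum_congr rfl fun k hk => ?_
      rw [mem_Ico] at hk
      simp only [z, card_filter_lt_eq hJ (show J i < k by omega) (by omega)]
      ring
    rw [hsplit] at hy_near ⊢
    rw [hblock]
    exact abs_add_neg_one_pow_mul_sub_le i hz_head hy_head hy_near
  obtain ⟨c, hc⟩ := hR z ⟨C, hz⟩
  exact absurd (hc.comp (hJ.tendsto_atTop.comp (tendsto_add_atTop_nat 1)))
    (not_tendsto_of_abs_sub_neg_one_pow_mul_le happrox (by rw [abs_neg]; linarith))

theorem summable_and_tendsto_triTransform_of_tendsto_col {S : ℕ → ℕ → ℝ} {d : ℕ → ℝ}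
    (hcol : ∀ k, Tendsto (fun J => S J k) atTop (𝓝 (d k)))
    (hS : ∀ y ∈ linfSeq, triTransform S y ∈ cSeq) {y : ℕ → ℝ} (hy : y ∈ linfSeq) :
    Summable (fun k => d k * y k) ∧ Tendsto (triTransform S y) atTop (𝓝 (∑' k, d k * y k)) := by
  obtain ⟨M, hM⟩ := exists_sum_abs_le_of_triTransform_mem_linfSeq fun y hy =>
    cSeq_subset_linfSeq (hS y hy)
  have hd : Summable fun k => |d k| := summable_of_sum_range_le (fun _ => abs_nonneg _) fun K =>
    le_of_tendsto (tendsto_finsetSum _ fun k _ => (hcol k).abs) <| by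
      filter_upwards [eventually_ge_atTop K] with J hJ
      exact (sum_le_sum_of_subset_of_nonneg (range_subset_range.2 (by omega))
        fun _ _ _ => abs_nonneg _).trans (hM J)
  have hdw : ∀ w ∈ linfSeq, Summable fun k => d k * w k := by
    rintro w ⟨C, hC⟩
    refine (hd.mul_right C).of_norm_bounded fun k => ?_
    rw [Real.norm_eq_abs, abs_mul]
    exact mul_le_mul_of_nonneg_left (hC k) (abs_nonneg _)
  have hdw_tendsto : ∀ w ∈ linfSeq, Tendsto (fun J => ∑ k ∈ range (J + 1), d k * w k) atTop
      (𝓝 (∑' k, d k * w k)) := fun w hw =>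
    (hdw w hw).hasSum.tendsto_sum_nat.comp (tendsto_add_atTop_nat 1)
  have hsub : ∀ w, triTransform (fun J k => S J k - d k) w =
      fun J => triTransform S w J - ∑ k ∈ range (J + 1), d k * w k := fun w => by
    funext J
    simp only [triTransform, sub_mul, sum_sub_distrib]
  have hzero := tendsto_triTransform_zero_of_tendsto_col_zero
    (fun k => by simpa using (hcol k).sub_const (d k))
    (fun w hw => by
      obtain ⟨L, hL⟩ := hS w hw
      exact ⟨_, hsub w ▸ hL.sub (hdw_tendsto w hw)⟩) hy
  refine ⟨hdw y hy, ?_⟩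
  simpa [hsub] using hzero.add (hdw_tendsto y hy)

theorem summable_and_tendsto_of_mem_betaDual {P Q : ℕ → ℕ → ℝ}
    (hPQ : ∀ n k, ∑ j ∈ Icc k n, P n j * Q j k = if n = k then 1 else 0) {a d : ℕ → ℝ}
    (hd : ∀ k, Tendsto (fun J => ∑ j ∈ Icc k J, a j * Q j k) atTop (𝓝 (d k)))
    (ha : a ∈ betaDual {x | triTransform P x ∈ linfSeq}) {y : ℕ → ℝ} (hy : y ∈ linfSeq) :
    Summable (fun k => d k * y k) ∧
      Tendsto (fun K => ∑ k ∈ range K, a k * triTransform Q y k) atTop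
        (𝓝 (∑' k, d k * y k)) := by
  refine (summable_and_tendsto_triTransform_of_tendsto_col hd (fun w hw => ?_) hy).imp_right
    fun h => (tendsto_add_atTop_iff_nat 1).1 ?_
  · obtain ⟨L, hL⟩ := ha (triTransform Q w)
      (by rwa [Set.mem_ofPred_eq, triTransform_triTransform_of_inverse hPQ])
    have hL' := (tendsto_add_atTop_iff_nat 1).2 hL
    simp only [sum_range_mul_triTransform] at hL'
    exact ⟨L, hL'⟩
  · simpa only [sum_range_mul_triTransform] using h

theorem hilbert_diff_matrix_from_hinf_general (m : ℕ) (Y : Set (ℕ → ℝ))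
    (A : ℕ → ℕ → ℝ)
    (B : ℕ → ℕ → ℝ)
    (hBright : ∀ n k : ℕ, (∑ j ∈ Finset.Icc k n, hMat m n j * B j k) = if n = k then 1 else 0)
    (hBleft : ∀ n k : ℕ, (∑ j ∈ Finset.Icc k n, B n j * hMat m j k) = if n = k then 1 else 0)
    (D : ℕ → ℕ → ℝ)
    (hD : ∀ n k : ℕ,
      Tendsto (fun J => ∑ j ∈ Finset.Icc k J, A n j * B j k) atTop (𝓝 (D n k))) :
    matClass A (hBdd m) Y ↔
      ((∀ n : ℕ, (fun k => A n k) ∈ betaDual (hBdd m)) ∧ matClass D linfSeq Y) := by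
  have hrow := fun n (hn : (fun k => A n k) ∈ betaDual (hBdd m)) (y : ℕ → ℝ) =>
    summable_and_tendsto_of_mem_betaDual (y := y) hBright (hD n) hn
  constructor
  · intro hA
    have hβ : ∀ n, (fun k => A n k) ∈ betaDual (hBdd m) := fun n x hx =>
      let ⟨Ax, hAx, _⟩ := hA x hx
      ⟨Ax n, hAx n⟩
    refine ⟨hβ, fun y hy => ?_⟩
    obtain ⟨Ax, hAx, hAxY⟩ := hA (triTransform B y)
      (show triTransform (hMat m) (triTransform B y) ∈ linfSeq by
        rwa [triTransform_triTransform_of_inverse hBright])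
    refine ⟨Ax, fun n => ?_, hAxY⟩
    obtain ⟨hsum, hlim⟩ := hrow n (hβ n) y hy
    exact tendsto_nhds_unique hlim (hAx n) ▸ hsum.hasSum.tendsto_sum_nat
  · rintro ⟨hβ, hDY⟩ x hx
    obtain ⟨Dx, hDx, hDxY⟩ := hDY (hTrans m x) hx
    refine ⟨Dx, fun n => ?_, hDxY⟩
    obtain ⟨hsum, hlim⟩ := hrow n (hβ n) (hTrans m x) hx
    rw [hTrans_eq_triTransform, triTransform_triTransform_of_inverse hBleft] at hlim
    exact tendsto_nhds_unique hsum.hasSum.tendsto_sum_nat (hDx n) ▸ hlim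

/-- `A ∈ (hBdd m : Y)` iff every row of `A` lies in the β-dual of `hBdd m` and the
matrix `D`, `d_{nk} = ∑_{j=k}^∞ a_{nj} B_{jk}`, satisfies `D ∈ (linfSeq : Y)`. -/
theorem hilbert_diff_matrix_from_hinf (m : ℕ) (hm : 1 ≤ m) (Y : Set (ℕ → ℝ))
    (A : ℕ → ℕ → ℝ)
    (B : ℕ → ℕ → ℝ)
    (hBtri : ∀ n k : ℕ, n < k → B n k = 0)
    (hBright : ∀ n k : ℕ, (∑ j ∈ Finset.Icc k n, hMat m n j * B j k) = if n = k then 1 else 0)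
    (hBleft : ∀ n k : ℕ, (∑ j ∈ Finset.Icc k n, B n j * hMat m j k) = if n = k then 1 else 0)
    (D : ℕ → ℕ → ℝ)
    (hD : ∀ n k : ℕ,
      Tendsto (fun J => ∑ j ∈ Finset.Icc k J, A n j * B j k) atTop (𝓝 (D n k))) :
    matClass A (hBdd m) Y ↔
      ((∀ n : ℕ, (fun k => A n k) ∈ betaDual (hBdd m)) ∧ matClass D linfSeq Y) :=
  hilbert_diff_matrix_from_hinf_general m Y A B hBright hBleft D hD
end

section
/- Fix an integer m ≥ 1 and an infinite matrix A = (a_{nk}). Suppose that for each n and k the series d_{nk} = Σ_{j=k}^{∞} a_{nj} B_{jk} converges, where B is the inverse triangle of H^(m), and let D = (d_{nk}). Then A ∈ (h_0(Δ^(m)) : ℓ∞) — i.e. for every x ∈ h_0(Δ^(m)) the series Σ_k a_{nk} x_k converges for each n and the resulting sequence is bounded — if and only if each row of A belongs to the β-dual of h_0(Δ^(m)) and sup_n Σ_k |d_{nk}| < ∞. -/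
open Filter Finset Topology

namespace HilbertAux

abbrev E := ZeroAtInftyContinuousMap ℕ ℝ

noncomputable def mkC0 (y : ℕ → ℝ) (hy : Tendsto y atTop (𝓝 0)) : E where
  toFun := y
  continuous_toFun := continuous_of_discreteTopology
  zero_at_infty' := by rwa [cocompact_eq_atTop (α := ℕ)]

@[simp] lemma mkC0_apply (y : ℕ → ℝ) (hy) (k : ℕ) : mkC0 y hy k = y k := rfl

lemma tendsto_coe (f : E) : Tendsto (⇑f) atTop (𝓝 0) := by
  have := zero_at_infty f
  rwa [cocompact_eq_atTop (α := ℕ)] at this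

lemma apply_le_norm (f : E) (k : ℕ) : |f k| ≤ ‖f‖ := by
  rw [← ZeroAtInftyContinuousMap.norm_toBCF_eq_norm]
  simpa [Real.norm_eq_abs] using BoundedContinuousFunction.norm_coe_le_norm f.toBCF k

lemma norm_le_of (f : E) (c : ℝ) (hc : 0 ≤ c) (h : ∀ k, |f k| ≤ c) : ‖f‖ ≤ c := by
  rw [← ZeroAtInftyContinuousMap.norm_toBCF_eq_norm]
  exact (BoundedContinuousFunction.norm_le hc).mpr (fun k => by simpa [Real.norm_eq_abs] using h k)

noncomputable def evalCLM (k : ℕ) : E →L[ℝ] ℝ :=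
  LinearMap.mkContinuous
    { toFun := fun f => f k
      map_add' := fun f g => rfl
      map_smul' := fun c f => rfl }
    1 (fun f => by simpa [Real.norm_eq_abs] using apply_le_norm f k)

@[simp] lemma evalCLM_apply (k : ℕ) (f : E) : evalCLM k f = f k := rfl

noncomputable def xOf (B : ℕ → ℕ → ℝ) (y : ℕ → ℝ) (k : ℕ) : ℝ :=
  ∑ j ∈ Finset.range (k + 1), B k j * y j

noncomputable def phiCLM (A B : ℕ → ℕ → ℝ) (n K : ℕ) : E →L[ℝ] ℝ :=
  ∑ k ∈ Finset.range K, A n k • ∑ j ∈ Finset.range (k + 1), B k j • evalCLM j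

lemma phiCLM_apply (A B : ℕ → ℕ → ℝ) (n K : ℕ) (y : E) :
    phiCLM A B n K y = ∑ k ∈ Finset.range K, A n k * xOf B (⇑y) k := by
  simp [phiCLM, xOf, ContinuousLinearMap.sum_apply, smul_eq_mul]

lemma sum_swap_tri (g : ℕ → ℕ → ℝ) (K : ℕ) :
    ∑ k ∈ Finset.range K, ∑ j ∈ Finset.range (k + 1), g k j
      = ∑ j ∈ Finset.range K, ∑ k ∈ Finset.Icc j (K - 1), g k j :=
  Finset.sum_comm' (by intro k j; simp only [Finset.mem_range, Finset.mem_Icc]; omega)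

lemma abel_identity (A B : ℕ → ℕ → ℝ) (y : ℕ → ℝ) (n K : ℕ) :
    ∑ k ∈ Finset.range K, A n k * xOf B y k
      = ∑ j ∈ Finset.range K, (∑ k ∈ Finset.Icc j (K - 1), A n k * B k j) * y j := by
  have : ∀ k, A n k * xOf B y k = ∑ j ∈ Finset.range (k + 1), A n k * B k j * y j := by
    intro k; rw [xOf, Finset.mul_sum]; ring_nf
  simp_rw [this, Finset.sum_mul]
  exact sum_swap_tri (fun k j => A n k * B k j * y j) K

lemma hTrans_xOf (m : ℕ) (B : ℕ → ℕ → ℝ)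
    (hBright : ∀ n k : ℕ, (∑ j ∈ Finset.Icc k n, hMat m n j * B j k) = if n = k then 1 else 0)
    (y : ℕ → ℝ) (n : ℕ) : hTrans m (xOf B y) n = y n := by
  have h := abel_identity (fun _ k => hMat m n k) B y n (n + 1)
  simp only [hTrans] at *
  rw [h]
  simp only [Nat.add_sub_cancel, hBright]
  rw [Finset.sum_eq_single n]
  · simp
  · intro j _ hj; simp [Ne.symm hj]
  · intro h; exact absurd (Finset.self_mem_range_succ n) h

lemma xOf_hTrans (m : ℕ) (B : ℕ → ℕ → ℝ)
    (hBleft : ∀ n k : ℕ, (∑ j ∈ Finset.Icc k n, B n j * hMat m j k) = if n = k then 1 else 0)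
    (x : ℕ → ℝ) (n : ℕ) : xOf B (hTrans m x) n = x n := by
  have hx : xOf (fun j k => hMat m j k) x = hTrans m x := rfl
  have h := abel_identity (fun _ j => B n j) (fun j k => hMat m j k) x n (n + 1)
  simp only [Nat.add_sub_cancel, hx] at h
  have h2 : xOf B (hTrans m x) n
      = ∑ k ∈ Finset.range (n + 1), (∑ j ∈ Finset.Icc k n, B n j * hMat m j k) * x k := h
  rw [h2]
  simp only [hBleft]
  rw [Finset.sum_eq_single n]
  · simp
  · intro j _ hj; simp [Ne.symm hj]
  · intro h; exact absurd (Finset.self_mem_range_succ n) h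

lemma xOf_mem_hZero (m : ℕ) (B : ℕ → ℕ → ℝ)
    (hBright : ∀ n k : ℕ, (∑ j ∈ Finset.Icc k n, hMat m n j * B j k) = if n = k then 1 else 0)
    (y : E) : xOf B (⇑y) ∈ hZero m := by
  have : hTrans m (xOf B (⇑y)) = ⇑y := funext (hTrans_xOf m B hBright (⇑y))
  simpa [hZero, this] using tendsto_coe y

lemma exists_F (m : ℕ) (A B : ℕ → ℕ → ℝ)
    (hBright : ∀ n k : ℕ, (∑ j ∈ Finset.Icc k n, hMat m n j * B j k) = if n = k then 1 else 0)
    (D : ℕ → ℕ → ℝ)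
    (hD : ∀ n k : ℕ,
      Tendsto (fun J => ∑ j ∈ Finset.Icc k J, A n j * B j k) atTop (𝓝 (D n k)))
    (hβ : ∀ n : ℕ, (fun k => A n k) ∈ betaDual (hZero m)) :
    ∃ F : ℕ → (E →L[ℝ] ℝ),
      (∀ n (y : E),
        Tendsto (fun K => ∑ k ∈ Finset.range K, A n k * xOf B (⇑y) k) atTop (𝓝 (F n y))) ∧
      (∀ n N (y : E), (∀ j, N ≤ j → y j = 0) →
        F n y = ∑ j ∈ Finset.range N, D n j * y j) := by
  have h1 : ∀ n (y : E), ∃ L, Tendsto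
      (fun K => ∑ k ∈ Finset.range K, A n k * xOf B (⇑y) k) atTop (𝓝 L) :=
    fun n y => hβ n _ (xOf_mem_hZero m B hBright y)
  choose f hf using h1
  have hphi : ∀ n (y : E), Tendsto (fun K => phiCLM A B n K y) atTop (𝓝 (f n y)) := by
    intro n y
    simpa only [phiCLM_apply] using hf n y
  refine ⟨fun n => continuousLinearMapOfTendsto (phiCLM A B n)
      (f := f n) (tendsto_pi_nhds.mpr (hphi n)), fun n y => hf n y, ?_⟩
  intro n N y hy
  show f n y = _
  refine tendsto_nhds_unique (hf n y) ?_
  have key : ∀ᶠ K in atTop, (∑ k ∈ Finset.range K, A n k * xOf B (⇑y) k)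
      = ∑ j ∈ Finset.range N, (∑ k ∈ Finset.Icc j (K - 1), A n k * B k j) * y j := by
    filter_upwards [eventually_ge_atTop N] with K hK
    rw [abel_identity]
    refine (Finset.sum_subset (Finset.range_subset_range.mpr hK) ?_).symm
    intro j _ hj
    rw [hy j (by simpa using hj), mul_zero]
  rw [tendsto_congr' key]
  refine tendsto_finset_sum _ (fun j _ => ?_)
  exact (((hD n j).comp (tendsto_sub_atTop_nat 1)).mul_const (y j))

lemma sum_absD_le_norm (F : E →L[ℝ] ℝ) (d : ℕ → ℝ) (N : ℕ)
    (hF : ∀ (y : E), (∀ j, N ≤ j → y j = 0) → F y = ∑ j ∈ Finset.range N, d j * y j) :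
    ∑ j ∈ Finset.range N, |d j| ≤ ‖F‖ := by
  set s : ℕ → ℝ := fun j => if j < N then (if d j < 0 then -1 else 1) else 0 with hs
  have hs0 : Tendsto s atTop (𝓝 0) := by
    refine tendsto_const_nhds.congr' ?_
    filter_upwards [eventually_ge_atTop N] with j hj
    simp [hs, Nat.not_lt.mpr hj]
  set y : E := mkC0 s hs0 with hy
  have hnorm : ‖y‖ ≤ 1 := by
    refine norm_le_of y 1 zero_le_one (fun k => ?_)
    simp only [hy, mkC0_apply, hs]
    split_ifs <;> simp
  have hval : F y = ∑ j ∈ Finset.range N, |d j| := by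
    rw [hF y (fun j hj => by simp [hy, hs, Nat.not_lt.mpr hj])]
    refine Finset.sum_congr rfl (fun j hj => ?_)
    have hjN : j < N := Finset.mem_range.mp hj
    simp only [hy, mkC0_apply, hs, if_pos hjN]
    rcases lt_or_ge (d j) 0 with h | h
    · rw [if_pos h, abs_of_neg h]; ring
    · rw [if_neg (not_lt.mpr h), abs_of_nonneg h]; ring
  calc ∑ j ∈ Finset.range N, |d j| = F y := hval.symm
    _ ≤ |F y| := le_abs_self _
    _ ≤ ‖F‖ * ‖y‖ := F.le_opNorm y
    _ ≤ ‖F‖ * 1 := by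
        exact mul_le_mul_of_nonneg_left hnorm (norm_nonneg F)
    _ = ‖F‖ := mul_one _

lemma F_le (F : E →L[ℝ] ℝ) (d : ℕ → ℝ) (M : ℝ)
    (hd : ∀ N, ∑ j ∈ Finset.range N, |d j| ≤ M)
    (hF : ∀ N (y : E), (∀ j, N ≤ j → y j = 0) → F y = ∑ j ∈ Finset.range N, d j * y j)
    (y : E) : |F y| ≤ M * ‖y‖ := by
  have hM0 : 0 ≤ M := le_trans (by simp) (hd 0)
  refine le_of_forall_pos_le_add (fun ε hε => ?_)
  set δ : ℝ := ε / (‖F‖ + 1) with hδdef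
  have hδ : 0 < δ := div_pos hε (by positivity)
  obtain ⟨N, hN⟩ : ∃ N, ∀ j ≥ N, |y j| < δ := by
    have h := tendsto_coe y
    have := (Metric.tendsto_nhds.mp h δ hδ)
    rw [eventually_atTop] at this
    obtain ⟨N, hN⟩ := this
    exact ⟨N, fun j hj => by simpa [Real.dist_eq] using hN j hj⟩
  set sN : ℕ → ℝ := fun j => if j < N then y j else 0 with hsN
  have hsN0 : Tendsto sN atTop (𝓝 0) := by
    refine tendsto_const_nhds.congr' ?_
    filter_upwards [eventually_ge_atTop N] with j hj
    simp [hsN, Nat.not_lt.mpr hj]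
  set yN : E := mkC0 sN hsN0 with hyN
  have hdiff : ‖y - yN‖ ≤ δ := by
    refine norm_le_of _ δ hδ.le (fun k => ?_)
    have : (y - yN) k = y k - yN k := rfl
    rw [this]
    simp only [hyN, mkC0_apply, hsN]
    split_ifs with h
    · simpa using hδ.le
    · simpa using (hN k (Nat.not_lt.mp h)).le
  have hFyN : |F yN| ≤ M * ‖y‖ := by
    rw [hF N yN (fun j hj => by simp [hyN, hsN, Nat.not_lt.mpr hj])]
    calc |∑ j ∈ Finset.range N, d j * yN j|
        ≤ ∑ j ∈ Finset.range N, |d j * yN j| := Finset.abs_sum_le_sum_abs _ _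
      _ ≤ ∑ j ∈ Finset.range N, |d j| * ‖y‖ := by
          refine Finset.sum_le_sum (fun j hj => ?_)
          rw [abs_mul]
          refine mul_le_mul_of_nonneg_left ?_ (abs_nonneg _)
          have hjN : j < N := Finset.mem_range.mp hj
          simp only [hyN, mkC0_apply, hsN, if_pos hjN]
          exact apply_le_norm y j
      _ = (∑ j ∈ Finset.range N, |d j|) * ‖y‖ := (Finset.sum_mul _ _ _).symm
      _ ≤ M * ‖y‖ := mul_le_mul_of_nonneg_right (hd N) (norm_nonneg y)
  have : |F y| ≤ |F (y - yN)| + |F yN| := by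
    have : F y = F (y - yN) + F yN := by rw [map_sub]; ring
    rw [this]; exact abs_add_le _ _
  refine this.trans ?_
  have h1 : |F (y - yN)| ≤ ε := by
    calc |F (y - yN)| ≤ ‖F‖ * ‖y - yN‖ := F.le_opNorm _
      _ ≤ ‖F‖ * δ := mul_le_mul_of_nonneg_left hdiff (norm_nonneg F)
      _ = ‖F‖ * (ε / (‖F‖ + 1)) := by rw [hδdef]
      _ ≤ ε := by
          rw [mul_div_assoc']
          rw [div_le_iff₀ (by positivity : (0:ℝ) < ‖F‖ + 1)]
          nlinarith [norm_nonneg F, hε.le]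
  linarith [hFyN, h1]

end HilbertAux


/-- `A ∈ (h_0(Δ^(m)) : ℓ∞)` iff every row of `A` lies in the β-dual of `h_0(Δ^(m))` and
`sup_n ∑_k |d_{nk}| < ∞`, where `d_{nk} = ∑_{j=k}^∞ a_{nj} B_{jk}`. -/
theorem hilbert_diff_matrix_h0_linf (m : ℕ) (hm : 1 ≤ m)
    (A : ℕ → ℕ → ℝ)
    (B : ℕ → ℕ → ℝ)
    (hBtri : ∀ n k : ℕ, n < k → B n k = 0)
    (hBright : ∀ n k : ℕ, (∑ j ∈ Finset.Icc k n, hMat m n j * B j k) = if n = k then 1 else 0)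
    (hBleft : ∀ n k : ℕ, (∑ j ∈ Finset.Icc k n, B n j * hMat m j k) = if n = k then 1 else 0)
    (D : ℕ → ℕ → ℝ)
    (hD : ∀ n k : ℕ,
      Tendsto (fun J => ∑ j ∈ Finset.Icc k J, A n j * B j k) atTop (𝓝 (D n k))) :
    matClass A (hZero m) linfSeq ↔
      ((∀ n : ℕ, (fun k => A n k) ∈ betaDual (hZero m)) ∧
        ∃ M : ℝ, ∀ n K : ℕ, ∑ k ∈ Finset.range K, |D n k| ≤ M) := by
  classical
  constructor
  · intro hA
    have hb : ∀ n : ℕ, (fun k => A n k) ∈ betaDual (hZero m) := by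
      intro n x hx
      obtain ⟨Ax, htend, _⟩ := hA x hx
      exact ⟨Ax n, htend n⟩
    obtain ⟨F, hF1, hF2⟩ := HilbertAux.exists_F m A B hBright D hD hb
    have hbound : ∀ y : HilbertAux.E, ∃ C, ∀ n, ‖F n y‖ ≤ C := by
      intro y
      obtain ⟨Ax, htend, M, hM⟩ := hA (HilbertAux.xOf B ⇑y)
        (HilbertAux.xOf_mem_hZero m B hBright y)
      refine ⟨M, fun n => ?_⟩
      have hu : F n y = Ax n := tendsto_nhds_unique (hF1 n y) (htend n)
      rw [Real.norm_eq_abs, hu]; exact hM n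
    obtain ⟨C, hC⟩ := banach_steinhaus hbound
    refine ⟨hb, C, fun n K => ?_⟩
    exact (HilbertAux.sum_absD_le_norm (F n) (D n) K (fun y hy => hF2 n K y hy)).trans (hC n)
  · rintro ⟨hb, M, hM⟩
    obtain ⟨F, hF1, hF2⟩ := HilbertAux.exists_F m A B hBright D hD hb
    intro x hx
    refine ⟨fun n => (hb n x hx).choose, fun n => (hb n x hx).choose_spec, ?_⟩
    set Y : HilbertAux.E := HilbertAux.mkC0 (hTrans m x) hx with hY
    have hxY : HilbertAux.xOf B ⇑Y = x :=
      funext (fun n => HilbertAux.xOf_hTrans m B hBleft x n)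
    refine ⟨M * ‖Y‖, fun n => ?_⟩
    have heq : (hb n x hx).choose = F n Y := by
      refine tendsto_nhds_unique ((hb n x hx).choose_spec) ?_
      have h := hF1 n Y
      rwa [hxY] at h
    show |(hb n x hx).choose| ≤ M * ‖Y‖
    rw [heq]
    exact HilbertAux.F_le (F n) (D n) M (fun N => hM n N) (fun N y hy => hF2 n N y hy) Y
end
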